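/- arXiv:2111.00114 — 5 statements merged into one kernel-verified Lean document; each statement's English description precedes it below -/
import Mathlib

section
/- Let a ≥ 0, b ≥ 0, c > 0, d > 0 be constants with 2c < d, and let φ : [r₁, r₂] → ℝ be a continuous nonnegative function satisfying φ(t) ≤ a + b(e^{-d(t-r₁)} + e^{-d(r₂-t)}) + c ∫_{r₁}^{r₂} e^{-d|t-s|} φ(s) ds for all t ∈ [r₁, r₂]. Then φ(t) ≤ ad/(d-2c) + (b/c)(d-h)(e^{-h(t-r₁)} + e^{-h(r₂-t)}) for all t ∈ [r₁, r₂], where h = √(d² - 2cd). -/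
/-!
With h² = d² - 2cd, the function ψ(t) = A + B (e^{-h(t-r₁)} + e^{-h(r₂-t)}), A = ad/(d-2c),
B = (b/c)(d-h), is a supersolution of the integral inequality: h is chosen so that
c (1/(d-h) + 1/(d+h)) = 1, which makes the kernel reproduce e^{±ht} up to boundary terms in
e^{-d(t-r₁)} and e^{-d(r₂-t)}, and B is chosen so that these boundary terms cancel the forcing
b (e^{-d(t-r₁)} + e^{-d(r₂-t)}). Comparison is a maximum principle: the kernel c e^{-d|t-s|} has
mass less than 2c/d < 1 on [r₁, r₂], so a positive maximum M of φ - ψ would satisfy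
M ≤ (2c/d) M < M.
-/

open MeasureTheory intervalIntegral Real Set

theorem integral_exp_mul_add {k m p q : ℝ} (hk : k ≠ 0) :
    ∫ s in p..q, exp (k * s + m) = (exp (k * q + m) - exp (k * p + m)) / k := by
  rw [integral_eq_sub_of_hasDerivAt (f := fun s => exp (k * s + m) / k), sub_div]
  · intro s _
    have := (((hasDerivAt_id' s).const_mul k).add_const m).exp.div_const k
    rwa [mul_one, mul_div_cancel_right₀ _ hk] at this
  · exact (by fun_prop : Continuous fun s => exp (k * s + m)).intervalIntegrable _ _

theorem integral_exp_neg_mul_abs_sub_mul_exp {d l p r₁ r₂ t : ℝ} (hdl : d + l ≠ 0)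
    (hld : d - l ≠ 0) (ht : t ∈ Icc r₁ r₂) :
    ∫ s in r₁..r₂, exp (-d * |t - s|) * exp (l * (s - p)) =
      (exp (l * (t - p)) - exp (l * (r₁ - p)) * exp (-d * (t - r₁))) / (d + l) +
        (exp (l * (t - p)) - exp (l * (r₂ - p)) * exp (-d * (r₂ - t))) / (d - l) := by
  have hint : ∀ x y,
      IntervalIntegrable (fun s => exp (-d * |t - s|) * exp (l * (s - p))) volume x y :=
    fun x y => (by fun_prop : Continuous _).intervalIntegrable x y
  rw [← integral_add_adjacent_intervals (hint r₁ t) (hint t r₂)]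
  have hleft : EqOn (fun s => exp (-d * |t - s|) * exp (l * (s - p)))
      (fun s => exp ((d + l) * s + (-d * t - l * p))) (uIcc r₁ t) := by
    intro s hs
    rw [uIcc_of_le ht.1] at hs
    dsimp only
    rw [abs_of_nonneg (sub_nonneg.2 hs.2), ← exp_add]
    ring_nf
  have hright : EqOn (fun s => exp (-d * |t - s|) * exp (l * (s - p)))
      (fun s => exp (-(d - l) * s + (d * t - l * p))) (uIcc t r₂) := by
    intro s hs
    rw [uIcc_of_le ht.2] at hs
    dsimp only
    rw [abs_of_nonpos (sub_nonpos.2 hs.1), ← exp_add]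
    ring_nf
  rw [integral_congr hleft, integral_congr hright, integral_exp_mul_add hdl,
    integral_exp_mul_add (neg_ne_zero.2 hld), ← exp_add, ← exp_add, div_neg, ← neg_div]
  ring_nf

theorem integral_exp_neg_mul_abs_sub_lt {d r₁ r₂ t : ℝ} (hd : 0 < d) (ht : t ∈ Icc r₁ r₂) :
    ∫ s in r₁..r₂, exp (-d * |t - s|) < 2 / d := by
  have h := integral_exp_neg_mul_abs_sub_mul_exp (l := 0) (p := 0) (by simpa using hd.ne')
    (by simpa using hd.ne') ht
  simp only [zero_mul, exp_zero, mul_one, one_mul, add_zero, sub_zero] at h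
  rw [h, ← add_div]
  gcongr
  linarith [exp_pos (-d * (t - r₁)), exp_pos (-d * (r₂ - t))]

theorem nonpos_of_le_integral_kernel_mul {r₁ r₂ : ℝ} {u : ℝ → ℝ} {k : ℝ → ℝ → ℝ}
    (hu : ContinuousOn u (Icc r₁ r₂))
    (hk_cont : ∀ t ∈ Icc r₁ r₂, ContinuousOn (k t) (Icc r₁ r₂))
    (hk_nonneg : ∀ t ∈ Icc r₁ r₂, ∀ s ∈ Icc r₁ r₂, 0 ≤ k t s)
    (hk_mass : ∀ t ∈ Icc r₁ r₂, ∫ s in r₁..r₂, k t s < 1)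
    (hle : ∀ t ∈ Icc r₁ r₂, u t ≤ ∫ s in r₁..r₂, k t s * u s) :
    ∀ t ∈ Icc r₁ r₂, u t ≤ 0 := by
  intro t ht
  have hr : r₁ ≤ r₂ := ht.1.trans ht.2
  obtain ⟨t₀, ht₀, hmax⟩ := isCompact_Icc.exists_isMaxOn ⟨t, ht⟩ hu
  suffices u t₀ ≤ 0 from (hmax ht).trans this
  by_contra! hpos
  have hk := hk_cont t₀ ht₀
  have : u t₀ ≤ u t₀ * ∫ s in r₁..r₂, k t₀ s := calc
    u t₀ ≤ ∫ s in r₁..r₂, k t₀ s * u s := hle t₀ ht₀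
    _ ≤ ∫ s in r₁..r₂, k t₀ s * u t₀ := by
      refine integral_mono_on hr ?_ ?_ fun s hs => ?_
      · exact (hk.mul hu).intervalIntegrable_of_Icc hr
      · exact (hk.mul continuousOn_const).intervalIntegrable_of_Icc hr
      · exact mul_le_mul_of_nonneg_left (hmax hs) (hk_nonneg t₀ ht₀ s hs)
    _ = u t₀ * ∫ s in r₁..r₂, k t₀ s := by rw [intervalIntegral.integral_mul_const, mul_comm]
  nlinarith [hk_mass t₀ ht₀]

theorem le_of_le_integral_exp_neg_abs {c d r₁ r₂ : ℝ} {f φ ψ : ℝ → ℝ} (hc : 0 ≤ c)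
    (hcd : 2 * c < d) (hφ : ContinuousOn φ (Icc r₁ r₂)) (hψ : ContinuousOn ψ (Icc r₁ r₂))
    (hφ_sub : ∀ t ∈ Icc r₁ r₂, φ t ≤ f t + c * ∫ s in r₁..r₂, exp (-d * |t - s|) * φ s)
    (hψ_super : ∀ t ∈ Icc r₁ r₂, f t + c * ∫ s in r₁..r₂, exp (-d * |t - s|) * ψ s ≤ ψ t) :
    ∀ t ∈ Icc r₁ r₂, φ t ≤ ψ t := by
  have hd : 0 < d := by linarith
  have key := nonpos_of_le_integral_kernel_mul (u := φ - ψ)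
    (k := fun t s => c * exp (-d * |t - s|)) (hφ.sub hψ)
    (fun t _ => by fun_prop) (fun t _ s _ => by positivity) ?_ ?_
  · exact fun t ht => sub_nonpos.1 (key t ht)
  · intro t ht
    rw [intervalIntegral.integral_const_mul]
    calc c * ∫ s in r₁..r₂, exp (-d * |t - s|) ≤ c * (2 / d) :=
          mul_le_mul_of_nonneg_left (integral_exp_neg_mul_abs_sub_lt hd ht).le hc
      _ < 1 := by rw [mul_div_assoc', div_lt_one hd]; linarith
  · intro t ht
    have hr : r₁ ≤ r₂ := ht.1.trans ht.2
    have hint : ∀ g : ℝ → ℝ, ContinuousOn g (Icc r₁ r₂) →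
        IntervalIntegrable (fun s => exp (-d * |t - s|) * g s) volume r₁ r₂ := fun g hg =>
      ((by fun_prop : Continuous fun s => exp (-d * |t - s|)).continuousOn.mul
        hg).intervalIntegrable_of_Icc hr
    simp only [Pi.sub_apply, mul_sub, mul_assoc]
    rw [intervalIntegral.integral_sub ((hint φ hφ).const_mul c) ((hint ψ hψ).const_mul c),
      intervalIntegral.integral_const_mul, intervalIntegral.integral_const_mul]
    linarith [hφ_sub t ht, hψ_super t ht]

theorem exp_neg_abs_supersolution {a b c d h A B r₁ r₂ : ℝ} (hc : 0 ≤ c) (hh : 0 < h)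
    (hhd : h < d) (hsq : h ^ 2 = d ^ 2 - 2 * c * d) (hA : (d - 2 * c) * A = a * d)
    (hB : c * B = b * (d - h)) (hA₀ : 0 ≤ A) (hB₀ : 0 ≤ B) :
    ∀ t ∈ Icc r₁ r₂, a + b * (exp (-d * (t - r₁)) + exp (-d * (r₂ - t)))
        + c * ∫ s in r₁..r₂,
            exp (-d * |t - s|) * (A + B * (exp (-h * (s - r₁)) + exp (-h * (r₂ - s))))
      ≤ A + B * (exp (-h * (t - r₁)) + exp (-h * (r₂ - t))) := by
  intro t ht
  have hd : 0 < d := hh.trans hhd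
  have hdh : d - h ≠ 0 := sub_ne_zero.2 hhd.ne'
  have hdh' : d + h ≠ 0 := by positivity
  have hint : ∀ l p,
      IntervalIntegrable (fun s => exp (-d * |t - s|) * exp (l * (s - p))) volume r₁ r₂ :=
    fun l p => (by fun_prop : Continuous _).intervalIntegrable _ _
  have hsplit : ∀ s,
      exp (-d * |t - s|) * (A + B * (exp (-h * (s - r₁)) + exp (-h * (r₂ - s)))) =
        A * (exp (-d * |t - s|) * exp (0 * (s - r₁)))
        + B * (exp (-d * |t - s|) * exp (-h * (s - r₁)))
        + B * (exp (-d * |t - s|) * exp (h * (s - r₂))) := by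
    intro s
    rw [zero_mul, exp_zero, show h * (s - r₂) = -h * (r₂ - s) by ring]
    ring
  simp only [hsplit]
  rw [intervalIntegral.integral_add (((hint _ _).const_mul _).add ((hint _ _).const_mul _))
      ((hint _ _).const_mul _), intervalIntegral.integral_add ((hint _ _).const_mul _)
      ((hint _ _).const_mul _), intervalIntegral.integral_const_mul,
    intervalIntegral.integral_const_mul, intervalIntegral.integral_const_mul,
    integral_exp_neg_mul_abs_sub_mul_exp (by simpa using hd.ne') (by simpa using hd.ne') ht,
    integral_exp_neg_mul_abs_sub_mul_exp (by simpa [← sub_eq_add_neg] using hdh)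
      (by simpa using hdh') ht,
    integral_exp_neg_mul_abs_sub_mul_exp hdh' hdh ht]
  have hP : exp (-h * (r₂ - r₁)) = exp (-h * (t - r₁)) * exp (-h * (r₂ - t)) := by
    rw [← exp_add]; ring_nf
  have hP' : exp (h * (r₁ - r₂)) = exp (-h * (t - r₁)) * exp (-h * (r₂ - t)) := by
    rw [← exp_add]; ring_nf
  have hE : exp (h * (t - r₂)) = exp (-h * (r₂ - t)) := by ring_nf
  simp only [zero_mul, exp_zero, sub_self, mul_zero, hP, hP', hE, add_zero, sub_zero,
    sub_neg_eq_add, ← sub_eq_add_neg]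
  set E₁ := exp (-d * (t - r₁))
  set E₂ := exp (-d * (r₂ - t))
  set E₃ := exp (-h * (t - r₁))
  set E₄ := exp (-h * (r₂ - t))
  have h₁ : 2 * c * A / d = A - a := by field_simp; linear_combination -hA
  have h₂ : c / (d - h) + c / (d + h) = 1 := by field_simp; linear_combination hsq
  have h₃ : c * B / (d - h) = b := by field_simp; linear_combination hB
  -- ψ t minus the left side is exactly this residual.
  have hres : 0 ≤ (E₁ + E₂) * (c * A / d + c * B * (E₃ * E₄) / (d + h)) := by positivity
  linear_combination hres + h₁ + B * (E₃ + E₄) * h₂ - (E₁ + E₂) * h₃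

theorem stmt0_general (a b c d r₁ r₂ : ℝ)
    (ha : 0 ≤ a) (hb : 0 ≤ b) (hc : 0 < c) (hd : 0 < d) (hcd : 2 * c < d)
    (φ : ℝ → ℝ) (hφcont : ContinuousOn φ (Set.Icc r₁ r₂))
    (hineq : ∀ t ∈ Set.Icc r₁ r₂,
      φ t ≤ a + b * (Real.exp (-d * (t - r₁)) + Real.exp (-d * (r₂ - t)))
          + c * ∫ s in r₁..r₂, Real.exp (-d * |t - s|) * φ s) :
    ∀ t ∈ Set.Icc r₁ r₂,
      φ t ≤ a * d / (d - 2 * c)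
          + (b / c) * (d - Real.sqrt (d ^ 2 - 2 * c * d))
            * (Real.exp (-Real.sqrt (d ^ 2 - 2 * c * d) * (t - r₁))
               + Real.exp (-Real.sqrt (d ^ 2 - 2 * c * d) * (r₂ - t))) := by
  have hdisc : 0 < d ^ 2 - 2 * c * d := by nlinarith
  set h := √(d ^ 2 - 2 * c * d)
  have hh : 0 < h := sqrt_pos.2 hdisc
  have hsq : h ^ 2 = d ^ 2 - 2 * c * d := sq_sqrt hdisc.le
  have hhd : h < d := by nlinarith
  have hd2c : 0 < d - 2 * c := by linarith
  refine le_of_le_integral_exp_neg_abs hc.le hcd hφcont (by fun_prop) hineq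
    (exp_neg_abs_supersolution hc.le hh hhd hsq ?_ ?_ ?_ ?_)
  · field_simp
  · field_simp
  · exact div_nonneg (mul_nonneg ha hd.le) hd2c.le
  · exact mul_nonneg (div_nonneg hb hc.le) (sub_nonneg.2 hhd.le)

/-- Gronwall–Coppel type inequality with symmetric exponential kernel. -/
theorem stmt0 (a b c d r₁ r₂ : ℝ) (hr : r₁ < r₂)
    (ha : 0 ≤ a) (hb : 0 ≤ b) (hc : 0 < c) (hd : 0 < d) (hcd : 2 * c < d)
    (φ : ℝ → ℝ) (hφcont : ContinuousOn φ (Set.Icc r₁ r₂))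
    (hφnn : ∀ t ∈ Set.Icc r₁ r₂, 0 ≤ φ t)
    (hineq : ∀ t ∈ Set.Icc r₁ r₂,
      φ t ≤ a + b * (Real.exp (-d * (t - r₁)) + Real.exp (-d * (r₂ - t)))
          + c * ∫ s in r₁..r₂, Real.exp (-d * |t - s|) * φ s) :
    ∀ t ∈ Set.Icc r₁ r₂,
      φ t ≤ a * d / (d - 2 * c)
          + (b / c) * (d - Real.sqrt (d ^ 2 - 2 * c * d))
            * (Real.exp (-Real.sqrt (d ^ 2 - 2 * c * d) * (t - r₁))
               + Real.exp (-Real.sqrt (d ^ 2 - 2 * c * d) * (r₂ - t))) :=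
  stmt0_general a b c d r₁ r₂ ha hb hc hd hcd φ hφcont hineq
end

section
/- Suppose A₊ is an r×r real matrix all of whose eigenvalues have positive real part and A₋ is a (p-r)×(p-r) real matrix all of whose eigenvalues have negative real part, with constants N ≥ 1, γ > 0 such that ‖e^{A₊t}‖ ≤ N e^{γt} for t ≤ 0 and ‖e^{A₋t}‖ ≤ N e^{-γt} for t ≥ 0. Let F : ℝ × ℝ^p → ℝ^p be bounded by M and Lipschitz in the second variable with constant L (measurable/piecewise continuous in t), written componentwise as F = (F₊, F₋). If √2·N·L < γ, then there exists a unique bounded continuous function φ = (φ₊, φ₋) : ℝ → ℝ^p satisfying φ₊(t) = -∫_t^∞ e^{A₊(t-s)} F₊(s, φ(s)) ds and φ₋(t) = ∫_{-∞}^t e^{A₋(t-s)} F₋(s, φ(s)) ds, and moreover sup_{t∈ℝ} ‖φ(t)‖ ≤ √2·N·M/γ. -/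
/-!
Bounded continuous solutions of the two integral equations are exactly the fixed points of the
Lyapunov–Perron operator `T` on the Banach space `ℝ →ᵇ ℝʳ × ℝ^q`, with the max norm on the
product. The exponential dichotomy makes both kernels integrate to at most `N / γ`, so `T` maps
into the ball of radius `N M / γ` and is `N K / γ`-Lipschitz when `F` is `K`-Lipschitz, and
Banach's fixed point theorem gives existence and uniqueness. Passing between the Euclidean and the
max norm on the product costs a factor `√2`, once in `K = √2 L` and once in the final bound.
The unstable integral over `[t, ∞)` reduces to the stable one over `(-∞, t]` by reversing time,
`s ↦ -s` and `A ↦ -A`.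
-/

open MeasureTheory Set NormedSpace BoundedContinuousFunction
open scoped NNReal

theorem exp_neg_mul_sub (γ t s : ℝ) :
    Real.exp (-γ * (t - s)) = Real.exp (-γ * t) * Real.exp (γ * s) := by
  rw [← Real.exp_add]; ring_nf

theorem integrableOn_exp_neg_mul_sub_Iic {γ : ℝ} (hγ : 0 < γ) (t : ℝ) :
    IntegrableOn (fun s => Real.exp (-γ * (t - s))) (Iic t) := by
  simp_rw [exp_neg_mul_sub]
  exact (integrableOn_exp_mul_Iic hγ t).const_mul _

theorem integral_exp_neg_mul_sub_Iic {γ : ℝ} (hγ : 0 < γ) (t : ℝ) :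
    ∫ s in Iic t, Real.exp (-γ * (t - s)) = γ⁻¹ := by
  simp_rw [exp_neg_mul_sub, integral_const_mul, integral_exp_mul_Iic hγ, mul_div_assoc',
    ← Real.exp_add]
  simp

theorem continuous_setIntegral_Iic {E : Type*} [NormedAddCommGroup E] [NormedSpace ℝ E]
    {q : ℝ → E} (hq : ∀ t, IntegrableOn q (Iic t)) :
    Continuous fun t => ∫ s in Iic t, q s :=
  continuous_iff_continuousAt.2 fun t =>
    (hq (t + 1)).continuousOn_Iic_primitive_Iic.continuousAt (Iic_mem_nhds (lt_add_one t))

theorem integrableOn_Ici_of_integrableOn_comp_neg {E : Type*} [NormedAddCommGroup E]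
    {g : ℝ → E} {t : ℝ} (h : IntegrableOn (fun s => g (-s)) (Iic (-t))) :
    IntegrableOn g (Ici t) := by
  have hneg : MeasurableEmbedding (Neg.neg : ℝ → ℝ) := (Homeomorph.neg ℝ).measurableEmbedding
  rw [← Measure.map_neg_eq_self (volume : Measure ℝ), hneg.integrableOn_map_iff]
  simpa [Function.comp_def] using h

theorem stronglyMeasurable_apply_of_continuous_of_measurable {X Y : Type*} [TopologicalSpace X]
    [TopologicalSpace.MetrizableSpace X] [SecondCountableTopology X] [MeasurableSpace X]
    [OpensMeasurableSpace X] [TopologicalSpace Y] [TopologicalSpace.PseudoMetrizableSpace Y]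
    [SecondCountableTopology Y] [MeasurableSpace Y] [BorelSpace Y] {F : ℝ → X → Y}
    (hc : ∀ t, Continuous (F t)) (hm : ∀ x, Measurable (F · x))
    {φ : ℝ → X} (hφ : Measurable φ) : StronglyMeasurable fun s => F s (φ s) :=
  ((measurable_uncurry_of_continuous_of_measurable (u := fun x t => F t x) hc hm).comp
    (hφ.prodMk measurable_id)).stronglyMeasurable

section ExpKernel

variable {E : Type*} [NormedAddCommGroup E] [NormedSpace ℝ E]
  {A : E →L[ℝ] E} {N γ C : ℝ} {f : ℝ → E}

theorem norm_exp_sub_smul_apply_le (hA : ∀ u, 0 ≤ u → ‖exp (u • A)‖ ≤ N * Real.exp (-γ * u))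
    (hC : ∀ s, ‖f s‖ ≤ C) {s t : ℝ} (hst : s ≤ t) :
    ‖exp ((t - s) • A) (f s)‖ ≤ N * C * Real.exp (-γ * (t - s)) := by
  have hexp := hA (t - s) (sub_nonneg.2 hst)
  calc _ ≤ ‖exp ((t - s) • A)‖ * ‖f s‖ := (exp ((t - s) • A)).le_opNorm _
    _ ≤ N * Real.exp (-γ * (t - s)) * C :=
        mul_le_mul hexp (hC s) (norm_nonneg _) ((norm_nonneg _).trans hexp)
    _ = _ := by ring

theorem norm_setIntegral_Iic_exp_sub_smul_apply_le (hγ : 0 < γ)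
    (hA : ∀ u, 0 ≤ u → ‖exp (u • A)‖ ≤ N * Real.exp (-γ * u)) (hC : ∀ s, ‖f s‖ ≤ C) (t : ℝ) :
    ‖∫ s in Iic t, exp ((t - s) • A) (f s)‖ ≤ N * C / γ :=
  calc _ ≤ ∫ s in Iic t, N * C * Real.exp (-γ * (t - s)) :=
        norm_integral_le_of_norm_le ((integrableOn_exp_neg_mul_sub_Iic hγ t).const_mul _)
          ((ae_restrict_iff' measurableSet_Iic).2
            (ae_of_all _ fun _ hs => norm_exp_sub_smul_apply_le hA hC hs))
    _ = N * C / γ := by rw [integral_const_mul, integral_exp_neg_mul_sub_Iic hγ, div_eq_mul_inv]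

theorem setIntegral_exp_sub_smul_apply_sub {f g : ℝ → E} {S : Set ℝ} {t : ℝ}
    (hf : IntegrableOn (fun s => exp ((t - s) • A) (f s)) S)
    (hg : IntegrableOn (fun s => exp ((t - s) • A) (g s)) S) :
    (∫ s in S, exp ((t - s) • A) (f s)) - ∫ s in S, exp ((t - s) • A) (g s)
      = ∫ s in S, exp ((t - s) • A) (f s - g s) := by
  simp only [← integral_sub hf hg, map_sub]

theorem exp_neg_sub_smul_neg (A : E →L[ℝ] E) (t s : ℝ) :
    exp ((-t - s) • -A) = exp ((t - -s) • A) := by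
  rw [smul_neg, ← neg_smul]
  ring_nf

theorem setIntegral_Ici_exp_sub_smul_apply_eq (A : E →L[ℝ] E) (f : ℝ → E) (t : ℝ) :
    ∫ s in Ici t, exp ((t - s) • A) (f s) = ∫ s in Iic (-t), exp ((-t - s) • -A) (f (-s)) := by
  simp_rw [exp_neg_sub_smul_neg, integral_comp_neg_Iic (f := fun s => exp ((t - s) • A) (f s)),
    neg_neg, integral_Ici_eq_integral_Ioi]

theorem norm_exp_smul_neg_le (hA : ∀ u, u ≤ 0 → ‖exp (u • A)‖ ≤ N * Real.exp (γ * u))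
    (u : ℝ) (hu : 0 ≤ u) : ‖exp (u • -A)‖ ≤ N * Real.exp (-γ * u) := by
  simpa [smul_neg, ← neg_smul] using hA (-u) (neg_nonpos.2 hu)

theorem norm_setIntegral_Ici_exp_sub_smul_apply_le (hγ : 0 < γ)
    (hA : ∀ u, u ≤ 0 → ‖exp (u • A)‖ ≤ N * Real.exp (γ * u)) (hC : ∀ s, ‖f s‖ ≤ C) (t : ℝ) :
    ‖∫ s in Ici t, exp ((t - s) • A) (f s)‖ ≤ N * C / γ := by
  rw [setIntegral_Ici_exp_sub_smul_apply_eq]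
  exact norm_setIntegral_Iic_exp_sub_smul_apply_le hγ (norm_exp_smul_neg_le hA)
    (fun s => hC (-s)) (-t)

variable [CompleteSpace E]

theorem exp_add_smul_apply (A : E →L[ℝ] E) (a b : ℝ) (v : E) :
    exp ((a + b) • A) v = exp (a • A) (exp (b • A) v) := by
  let +nondep : NormedAlgebra ℚ (E →L[ℝ] E) := .restrictScalars ℚ ℝ (E →L[ℝ] E)
  rw [add_smul, exp_add_of_commute (((Commute.refl A).smul_left a).smul_right b)]
  rfl

theorem continuous_exp_smul (A : E →L[ℝ] E) : Continuous fun t : ℝ => exp (t • A) := by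
  let +nondep : NormedAlgebra ℚ (E →L[ℝ] E) := .restrictScalars ℚ ℝ (E →L[ℝ] E)
  exact exp_continuous.comp (continuous_id.smul continuous_const)

theorem stronglyMeasurable_exp_sub_smul_apply (A : E →L[ℝ] E)
    (hf : StronglyMeasurable f) (t : ℝ) :
    StronglyMeasurable fun s => exp ((t - s) • A) (f s) :=
  isBoundedBilinearMap_apply.continuous.comp_stronglyMeasurable
    (((continuous_exp_smul A).comp (continuous_sub_left t)).stronglyMeasurable.prodMk hf)

theorem setIntegral_exp_sub_smul_apply {S : Set ℝ}
    (hf : IntegrableOn (fun s => exp (-s • A) (f s)) S) (t : ℝ) :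
    ∫ s in S, exp ((t - s) • A) (f s) = exp (t • A) (∫ s in S, exp (-s • A) (f s)) := by
  simp_rw [← ContinuousLinearMap.integral_comp_comm _ hf, ← exp_add_smul_apply, sub_eq_add_neg]

theorem integrableOn_Iic_exp_sub_smul_apply (hγ : 0 < γ)
    (hA : ∀ u, 0 ≤ u → ‖exp (u • A)‖ ≤ N * Real.exp (-γ * u))
    (hf : StronglyMeasurable f) (hC : ∀ s, ‖f s‖ ≤ C) (t : ℝ) :
    IntegrableOn (fun s => exp ((t - s) • A) (f s)) (Iic t) :=
  ((integrableOn_exp_neg_mul_sub_Iic hγ t).const_mul (N * C)).mono'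
    (stronglyMeasurable_exp_sub_smul_apply A hf t).aestronglyMeasurable
    ((ae_restrict_iff' measurableSet_Iic).2
      (ae_of_all _ fun _ hs => norm_exp_sub_smul_apply_le hA hC hs))

theorem continuous_setIntegral_Iic_exp_sub_smul_apply (hγ : 0 < γ)
    (hA : ∀ u, 0 ≤ u → ‖exp (u • A)‖ ≤ N * Real.exp (-γ * u))
    (hf : StronglyMeasurable f) (hC : ∀ s, ‖f s‖ ≤ C) :
    Continuous fun t => ∫ s in Iic t, exp ((t - s) • A) (f s) := by
  have hq (t : ℝ) : IntegrableOn (fun s => exp (-s • A) (f s)) (Iic t) := by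
    refine IntegrableOn.congr_fun ((exp (-t • A)).integrable_comp
      (integrableOn_Iic_exp_sub_smul_apply hγ hA hf hC t)) (fun s _ => ?_) measurableSet_Iic
    rw [← exp_add_smul_apply, show -t + (t - s) = -s by ring]
  simp_rw [setIntegral_exp_sub_smul_apply (hq _)]
  exact (continuous_exp_smul A).clm_apply (continuous_setIntegral_Iic hq)

theorem integrableOn_Ici_exp_sub_smul_apply (hγ : 0 < γ)
    (hA : ∀ u, u ≤ 0 → ‖exp (u • A)‖ ≤ N * Real.exp (γ * u))
    (hf : StronglyMeasurable f) (hC : ∀ s, ‖f s‖ ≤ C) (t : ℝ) :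
    IntegrableOn (fun s => exp ((t - s) • A) (f s)) (Ici t) :=
  integrableOn_Ici_of_integrableOn_comp_neg <| by
    simpa only [exp_neg_sub_smul_neg, Function.comp_apply] using
      integrableOn_Iic_exp_sub_smul_apply hγ (norm_exp_smul_neg_le hA)
        (hf.comp_measurable measurable_neg) (fun s => hC (-s)) (-t)

theorem continuous_setIntegral_Ici_exp_sub_smul_apply (hγ : 0 < γ)
    (hA : ∀ u, u ≤ 0 → ‖exp (u • A)‖ ≤ N * Real.exp (γ * u))
    (hf : StronglyMeasurable f) (hC : ∀ s, ‖f s‖ ≤ C) :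
    Continuous fun t => ∫ s in Ici t, exp ((t - s) • A) (f s) := by
  simp_rw [setIntegral_Ici_exp_sub_smul_apply_eq A f]
  exact (continuous_setIntegral_Iic_exp_sub_smul_apply hγ (norm_exp_smul_neg_le hA)
    (hf.comp_measurable measurable_neg) fun s => hC (-s)).comp continuous_neg

end ExpKernel

section LyapunovPerron

variable {E₁ E₂ : Type*} [NormedAddCommGroup E₁] [NormedSpace ℝ E₁]
  [NormedAddCommGroup E₂] [NormedSpace ℝ E₂]
  {A₁ : E₁ →L[ℝ] E₁} {A₂ : E₂ →L[ℝ] E₂} {F : ℝ → E₁ × E₂ → E₁ × E₂} {N γ M : ℝ}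

noncomputable def lyapunovPerronMap (A₁ : E₁ →L[ℝ] E₁) (A₂ : E₂ →L[ℝ] E₂)
    (F : ℝ → E₁ × E₂ → E₁ × E₂) (φ : ℝ → E₁ × E₂) (t : ℝ) : E₁ × E₂ :=
  (-∫ s in Ici t, exp ((t - s) • A₁) (F s (φ s)).1, ∫ s in Iic t, exp ((t - s) • A₂) (F s (φ s)).2)

theorem norm_lyapunovPerronMap_le (hγ : 0 < γ)
    (hA₁ : ∀ u, u ≤ 0 → ‖exp (u • A₁)‖ ≤ N * Real.exp (γ * u))
    (hA₂ : ∀ u, 0 ≤ u → ‖exp (u • A₂)‖ ≤ N * Real.exp (-γ * u))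
    (hF : ∀ t x, ‖F t x‖ ≤ M) (φ : ℝ → E₁ × E₂) (t : ℝ) :
    ‖lyapunovPerronMap A₁ A₂ F φ t‖ ≤ N * M / γ := by
  refine max_le ?_ ?_
  · rw [lyapunovPerronMap, norm_neg]
    exact norm_setIntegral_Ici_exp_sub_smul_apply_le hγ hA₁
      (fun s => (norm_fst_le _).trans (hF s (φ s))) t
  · exact norm_setIntegral_Iic_exp_sub_smul_apply_le hγ hA₂
      (fun s => (norm_snd_le _).trans (hF s (φ s))) t

variable [CompleteSpace E₁] [CompleteSpace E₂]

theorem continuous_lyapunovPerronMap (hγ : 0 < γ)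
    (hA₁ : ∀ u, u ≤ 0 → ‖exp (u • A₁)‖ ≤ N * Real.exp (γ * u))
    (hA₂ : ∀ u, 0 ≤ u → ‖exp (u • A₂)‖ ≤ N * Real.exp (-γ * u))
    (hF : ∀ t x, ‖F t x‖ ≤ M) {φ : ℝ → E₁ × E₂}
    (hFφ : StronglyMeasurable fun s => F s (φ s)) :
    Continuous (lyapunovPerronMap A₁ A₂ F φ) :=
  (continuous_setIntegral_Ici_exp_sub_smul_apply hγ hA₁ hFφ.fst
    (fun s => (norm_fst_le _).trans (hF s (φ s)))).neg.prodMk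
  (continuous_setIntegral_Iic_exp_sub_smul_apply hγ hA₂ hFφ.snd
    (fun s => (norm_snd_le _).trans (hF s (φ s))))

theorem norm_lyapunovPerronMap_sub_le (hγ : 0 < γ)
    (hA₁ : ∀ u, u ≤ 0 → ‖exp (u • A₁)‖ ≤ N * Real.exp (γ * u))
    (hA₂ : ∀ u, 0 ≤ u → ‖exp (u • A₂)‖ ≤ N * Real.exp (-γ * u))
    (hF : ∀ t x, ‖F t x‖ ≤ M) {K : ℝ≥0} (hF_lip : ∀ t, LipschitzWith K (F t))
    {φ ψ : ℝ → E₁ × E₂} (hFφ : StronglyMeasurable fun s => F s (φ s))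
    (hFψ : StronglyMeasurable fun s => F s (ψ s)) {D : ℝ} (hD : ∀ s, ‖φ s - ψ s‖ ≤ D) (t : ℝ) :
    ‖lyapunovPerronMap A₁ A₂ F φ t - lyapunovPerronMap A₁ A₂ F ψ t‖ ≤ N * (K * D) / γ := by
  have hF₁ (χ : ℝ → E₁ × E₂) (s : ℝ) : ‖(F s (χ s)).1‖ ≤ M := (norm_fst_le _).trans (hF s _)
  have hF₂ (χ : ℝ → E₁ × E₂) (s : ℝ) : ‖(F s (χ s)).2‖ ≤ M := (norm_snd_le _).trans (hF s _)
  have hΔ (s : ℝ) : ‖F s (φ s) - F s (ψ s)‖ ≤ K * D := (hF_lip s).norm_sub_le_of_le (hD s)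
  refine max_le ?_ ?_
  · rw [Prod.fst_sub, lyapunovPerronMap, lyapunovPerronMap, neg_sub_neg, norm_sub_rev,
      setIntegral_exp_sub_smul_apply_sub
        (integrableOn_Ici_exp_sub_smul_apply hγ hA₁ hFφ.fst (hF₁ φ) t)
        (integrableOn_Ici_exp_sub_smul_apply hγ hA₁ hFψ.fst (hF₁ ψ) t)]
    exact norm_setIntegral_Ici_exp_sub_smul_apply_le hγ hA₁
      (fun s => (norm_fst_le _).trans (hΔ s)) t
  · rw [Prod.snd_sub, lyapunovPerronMap, lyapunovPerronMap,
      setIntegral_exp_sub_smul_apply_sub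
        (integrableOn_Iic_exp_sub_smul_apply hγ hA₂ hFφ.snd (hF₂ φ) t)
        (integrableOn_Iic_exp_sub_smul_apply hγ hA₂ hFψ.snd (hF₂ ψ) t)]
    exact norm_setIntegral_Iic_exp_sub_smul_apply_le hγ hA₂
      (fun s => (norm_snd_le _).trans (hΔ s)) t

theorem existsUnique_fixedPoint_lyapunovPerronMap [MeasurableSpace E₁] [BorelSpace E₁]
    [SecondCountableTopology E₁] [MeasurableSpace E₂] [BorelSpace E₂]
    [SecondCountableTopology E₂] {K : ℝ≥0} (hγ : 0 < γ)
    (hA₁ : ∀ u, u ≤ 0 → ‖exp (u • A₁)‖ ≤ N * Real.exp (γ * u))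
    (hA₂ : ∀ u, 0 ≤ u → ‖exp (u • A₂)‖ ≤ N * Real.exp (-γ * u))
    (hF : ∀ t x, ‖F t x‖ ≤ M) (hF_lip : ∀ t, LipschitzWith K (F t))
    (hF_meas : ∀ x, Measurable (F · x)) (hK : N * K < γ) :
    ∃ φ : ℝ →ᵇ E₁ × E₂, (∀ t, ‖φ t‖ ≤ N * M / γ) ∧
      ∀ ψ : ℝ →ᵇ E₁ × E₂, lyapunovPerronMap A₁ A₂ F ψ = ψ ↔ ψ = φ := by
  have hFφ (φ : ℝ →ᵇ E₁ × E₂) : StronglyMeasurable fun s => F s (φ s) :=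
    stronglyMeasurable_apply_of_continuous_of_measurable (fun t => (hF_lip t).continuous)
      hF_meas φ.continuous.measurable
  let T (φ : ℝ →ᵇ E₁ × E₂) : ℝ →ᵇ E₁ × E₂ :=
    .ofNormedAddCommGroup (lyapunovPerronMap A₁ A₂ F φ)
      (continuous_lyapunovPerronMap hγ hA₁ hA₂ hF (hFφ φ)) (N * M / γ)
      (norm_lyapunovPerronMap_le hγ hA₁ hA₂ hF φ)
  have hT : ContractingWith (N * K / γ).toNNReal T := by
    refine ⟨Real.toNNReal_lt_one.2 ((div_lt_one hγ).2 hK),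
      LipschitzWith.of_dist_le_mul fun φ ψ => ?_⟩
    refine BoundedContinuousFunction.dist_le_iff_of_nonempty.2 fun t => ?_
    calc dist (T φ t) (T ψ t) ≤ N * (K * dist φ ψ) / γ := by
          rw [dist_eq_norm]
          exact norm_lyapunovPerronMap_sub_le hγ hA₁ hA₂ hF hF_lip (hFφ φ) (hFφ ψ)
            (fun s => (dist_eq_norm (φ s) (ψ s)).symm.trans_le
              (BoundedContinuousFunction.dist_coe_le_dist s)) t
      _ = N * K / γ * dist φ ψ := by ring
      _ ≤ _ := mul_le_mul_of_nonneg_right (Real.le_coe_toNNReal _) dist_nonneg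
  have : Nonempty (ℝ →ᵇ E₁ × E₂) := ⟨0⟩
  have hfix : T (ContractingWith.fixedPoint T hT) = ContractingWith.fixedPoint T hT :=
    hT.fixedPoint_isFixedPt
  refine ⟨ContractingWith.fixedPoint T hT, fun t => ?_, fun ψ => ?_⟩
  · rw [← hfix]
    exact norm_lyapunovPerronMap_le hγ hA₁ hA₂ hF _ t
  · refine ⟨fun h => hT.fixedPoint_unique (DFunLike.coe_injective h), ?_⟩
    rintro rfl
    exact congrArg DFunLike.coe hfix

end LyapunovPerron

section ProdNorm

variable {E₁ E₂ : Type*} [SeminormedAddCommGroup E₁] [SeminormedAddCommGroup E₂]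

theorem Prod.norm_le_sqrt_sq_add_sq (x : E₁ × E₂) : ‖x‖ ≤ √(‖x.1‖ ^ 2 + ‖x.2‖ ^ 2) :=
  max_le (Real.le_sqrt_of_sq_le (le_add_of_nonneg_right (sq_nonneg _)))
    (Real.le_sqrt_of_sq_le (le_add_of_nonneg_left (sq_nonneg _)))

theorem Prod.sqrt_sq_add_sq_le (x : E₁ × E₂) : √(‖x.1‖ ^ 2 + ‖x.2‖ ^ 2) ≤ √2 * ‖x‖ := by
  have h₁ := norm_fst_le x
  have h₂ := norm_snd_le x
  calc √(‖x.1‖ ^ 2 + ‖x.2‖ ^ 2) ≤ √(2 * ‖x‖ ^ 2) :=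
        Real.sqrt_le_sqrt (by nlinarith [norm_nonneg x.1, norm_nonneg x.2])
    _ = √2 * ‖x‖ := by rw [Real.sqrt_mul zero_le_two, Real.sqrt_sq (norm_nonneg x)]

end ProdNorm

theorem stmt1_general (r q : ℕ)
    (Ap : Matrix (Fin r) (Fin r) ℝ) (Am : Matrix (Fin q) (Fin q) ℝ)
    (N γ M L : ℝ) (hγ : 0 < γ) (hL : 0 < L)
    (hexpP : ∀ t : ℝ, t ≤ 0 →
      ‖NormedSpace.exp (t • (Matrix.toEuclideanCLM (𝕜 := ℝ) Ap))‖ ≤ N * Real.exp (γ * t))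
    (hexpM : ∀ t : ℝ, 0 ≤ t →
      ‖NormedSpace.exp (t • (Matrix.toEuclideanCLM (𝕜 := ℝ) Am))‖ ≤ N * Real.exp (-γ * t))
    (Fp : ℝ → EuclideanSpace ℝ (Fin r) × EuclideanSpace ℝ (Fin q) → EuclideanSpace ℝ (Fin r))
    (Fm : ℝ → EuclideanSpace ℝ (Fin r) × EuclideanSpace ℝ (Fin q) → EuclideanSpace ℝ (Fin q))
    (hFbound : ∀ t x, Real.sqrt (‖Fp t x‖ ^ 2 + ‖Fm t x‖ ^ 2) ≤ M)
    (hFlip : ∀ t x y, Real.sqrt (‖Fp t x - Fp t y‖ ^ 2 + ‖Fm t x - Fm t y‖ ^ 2)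
        ≤ L * Real.sqrt (‖x.1 - y.1‖ ^ 2 + ‖x.2 - y.2‖ ^ 2))
    (hFmeas : ∀ x, Measurable (fun t => Fp t x) ∧ Measurable (fun t => Fm t x))
    (hcontract : Real.sqrt 2 * N * L < γ) :
    ∃ φp : ℝ → EuclideanSpace ℝ (Fin r), ∃ φm : ℝ → EuclideanSpace ℝ (Fin q),
      (Continuous φp ∧ Continuous φm ∧
        (∀ t, Real.sqrt (‖φp t‖ ^ 2 + ‖φm t‖ ^ 2) ≤ Real.sqrt 2 * N * M / γ) ∧
        (∀ t, φp t = - ∫ s in Set.Ici t,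
          NormedSpace.exp ((t - s) • (Matrix.toEuclideanCLM (𝕜 := ℝ) Ap)) (Fp s (φp s, φm s))) ∧
        (∀ t, φm t = ∫ s in Set.Iic t,
          NormedSpace.exp ((t - s) • (Matrix.toEuclideanCLM (𝕜 := ℝ) Am)) (Fm s (φp s, φm s)))) ∧
      (∀ ψp : ℝ → EuclideanSpace ℝ (Fin r), ∀ ψm : ℝ → EuclideanSpace ℝ (Fin q),
        Continuous ψp → Continuous ψm →
        (∃ C, ∀ t, Real.sqrt (‖ψp t‖ ^ 2 + ‖ψm t‖ ^ 2) ≤ C) →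
        (∀ t, ψp t = - ∫ s in Set.Ici t,
          NormedSpace.exp ((t - s) • (Matrix.toEuclideanCLM (𝕜 := ℝ) Ap)) (Fp s (ψp s, ψm s))) →
        (∀ t, ψm t = ∫ s in Set.Iic t,
          NormedSpace.exp ((t - s) • (Matrix.toEuclideanCLM (𝕜 := ℝ) Am)) (Fm s (ψp s, ψm s))) →
        ψp = φp ∧ ψm = φm) := by
  let F (t : ℝ) (x : EuclideanSpace ℝ (Fin r) × EuclideanSpace ℝ (Fin q)) := (Fp t x, Fm t x)
  have hF (t x) : ‖F t x‖ ≤ M := (Prod.norm_le_sqrt_sq_add_sq _).trans (hFbound t x)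
  have hF_lip (t : ℝ) : LipschitzWith (√2 * L).toNNReal (F t) := by
    refine lipschitzWith_iff_norm_sub_le.2 fun x y => ?_
    calc ‖F t x - F t y‖ ≤ L * √(‖x.1 - y.1‖ ^ 2 + ‖x.2 - y.2‖ ^ 2) :=
          (Prod.norm_le_sqrt_sq_add_sq _).trans (hFlip t x y)
      _ ≤ L * (√2 * ‖x - y‖) := mul_le_mul_of_nonneg_left (Prod.sqrt_sq_add_sq_le (x - y)) hL.le
      _ = _ := by rw [Real.coe_toNNReal _ (by positivity)]; ring
  obtain ⟨φ, hφ_bound, hφ_fix⟩ := existsUnique_fixedPoint_lyapunovPerronMap hγ hexpP hexpM hF hF_lip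
    (fun x => (hFmeas x).1.prodMk (hFmeas x).2)
    (by rwa [Real.coe_toNNReal _ (by positivity), ← mul_assoc, mul_comm N])
  have hφ := congrFun ((hφ_fix φ).2 rfl)
  refine ⟨fun t => (φ t).1, fun t => (φ t).2, ⟨φ.continuous.fst, φ.continuous.snd, fun t => ?_,
    fun t => congrArg Prod.fst (hφ t).symm, fun t => congrArg Prod.snd (hφ t).symm⟩, ?_⟩
  · calc _ ≤ √2 * ‖φ t‖ := Prod.sqrt_sq_add_sq_le (φ t)
      _ ≤ √2 * (N * M / γ) := mul_le_mul_of_nonneg_left (hφ_bound t) (Real.sqrt_nonneg 2)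
      _ = _ := by ring
  · rintro ψp ψm hψp hψm ⟨C, hC⟩ hψp_eq hψm_eq
    let ψ : ℝ →ᵇ EuclideanSpace ℝ (Fin r) × EuclideanSpace ℝ (Fin q) :=
      .ofNormedAddCommGroup (fun t => (ψp t, ψm t)) (hψp.prodMk hψm) C
        fun t => (Prod.norm_le_sqrt_sq_add_sq _).trans (hC t)
    have hψ := (hφ_fix ψ).1 (funext fun t => Prod.ext (hψp_eq t).symm (hψm_eq t).symm)
    exact ⟨funext fun t => congrArg (fun χ : ℝ →ᵇ _ => (χ t).1) hψ,
      funext fun t => congrArg (fun χ : ℝ →ᵇ _ => (χ t).2) hψ⟩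

/-- Existence and uniqueness of a bounded solution of the hyperbolic integral equations. -/
theorem stmt1 (r q : ℕ)
    (Ap : Matrix (Fin r) (Fin r) ℝ) (Am : Matrix (Fin q) (Fin q) ℝ)
    (hAp : ∀ μ ∈ ((Ap.map (algebraMap ℝ ℂ)).charpoly).roots, 0 < μ.re)
    (hAm : ∀ μ ∈ ((Am.map (algebraMap ℝ ℂ)).charpoly).roots, μ.re < 0)
    (N γ M L : ℝ) (hN : 1 ≤ N) (hγ : 0 < γ) (hM : 0 < M) (hL : 0 < L)
    (hexpP : ∀ t : ℝ, t ≤ 0 →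
      ‖NormedSpace.exp (t • (Matrix.toEuclideanCLM (𝕜 := ℝ) Ap))‖ ≤ N * Real.exp (γ * t))
    (hexpM : ∀ t : ℝ, 0 ≤ t →
      ‖NormedSpace.exp (t • (Matrix.toEuclideanCLM (𝕜 := ℝ) Am))‖ ≤ N * Real.exp (-γ * t))
    (Fp : ℝ → EuclideanSpace ℝ (Fin r) × EuclideanSpace ℝ (Fin q) → EuclideanSpace ℝ (Fin r))
    (Fm : ℝ → EuclideanSpace ℝ (Fin r) × EuclideanSpace ℝ (Fin q) → EuclideanSpace ℝ (Fin q))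
    (hFbound : ∀ t x, Real.sqrt (‖Fp t x‖ ^ 2 + ‖Fm t x‖ ^ 2) ≤ M)
    (hFlip : ∀ t x y, Real.sqrt (‖Fp t x - Fp t y‖ ^ 2 + ‖Fm t x - Fm t y‖ ^ 2)
        ≤ L * Real.sqrt (‖x.1 - y.1‖ ^ 2 + ‖x.2 - y.2‖ ^ 2))
    (hFmeas : ∀ x, Measurable (fun t => Fp t x) ∧ Measurable (fun t => Fm t x))
    (hcontract : Real.sqrt 2 * N * L < γ) :
    ∃ φp : ℝ → EuclideanSpace ℝ (Fin r), ∃ φm : ℝ → EuclideanSpace ℝ (Fin q),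
      (Continuous φp ∧ Continuous φm ∧
        (∀ t, Real.sqrt (‖φp t‖ ^ 2 + ‖φm t‖ ^ 2) ≤ Real.sqrt 2 * N * M / γ) ∧
        (∀ t, φp t = - ∫ s in Set.Ici t,
          NormedSpace.exp ((t - s) • (Matrix.toEuclideanCLM (𝕜 := ℝ) Ap)) (Fp s (φp s, φm s))) ∧
        (∀ t, φm t = ∫ s in Set.Iic t,
          NormedSpace.exp ((t - s) • (Matrix.toEuclideanCLM (𝕜 := ℝ) Am)) (Fm s (φp s, φm s)))) ∧
      (∀ ψp : ℝ → EuclideanSpace ℝ (Fin r), ∀ ψm : ℝ → EuclideanSpace ℝ (Fin q),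
        Continuous ψp → Continuous ψm →
        (∃ C, ∀ t, Real.sqrt (‖ψp t‖ ^ 2 + ‖ψm t‖ ^ 2) ≤ C) →
        (∀ t, ψp t = - ∫ s in Set.Ici t,
          NormedSpace.exp ((t - s) • (Matrix.toEuclideanCLM (𝕜 := ℝ) Ap)) (Fp s (ψp s, ψm s))) →
        (∀ t, ψm t = ∫ s in Set.Iic t,
          NormedSpace.exp ((t - s) • (Matrix.toEuclideanCLM (𝕜 := ℝ) Am)) (Fm s (ψp s, ψm s))) →
        ψp = φp ∧ ψm = φm) :=
  stmt1_general r q Ap Am N γ M L hγ hL hexpP hexpM Fp Fm hFbound hFlip hFmeas hcontract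
end

section
/- Let {z_k}_{k∈ℤ} be an unpredictable sequence of real numbers with values in [0,1], and let h : ℝ → ℝ^p be a function which is Lipschitz on [0,1] with constant L_h > 0 and satisfies |h(u) − h(v)| ≥ ℓ|u − v| for some ℓ > 0 and all u, v ∈ [0,1] (bi-Lipschitz from below on [0,1]). Then {h(z_k)}_{k∈ℤ} is an unpredictable sequence in ℝ^p with unpredictability constant ℓδ₀, where δ₀ is the unpredictability constant of {z_k}. -/
/-!
A map that is Lipschitz on `[0,1]` is continuous there, hence bounded on the compact set
`[0,1]`, and it sends pairs of points with distances tending to zero to pairs with the same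
property; the lower bound `ℓ |u - v| ≤ ‖h u - h v‖` turns the separation `δ₀` into `ℓ δ₀`.
-/

open Filter Topology NNReal

theorem LipschitzOnWith.toNNReal_of_norm_sub_le {E : Type*} [SeminormedAddCommGroup E]
    {f : ℝ → E} {L : ℝ} {s : Set ℝ} (hf : ∀ u ∈ s, ∀ v ∈ s, ‖f u - f v‖ ≤ L * |u - v|) :
    LipschitzOnWith L.toNNReal f s :=
  LipschitzOnWith.of_dist_le_mul fun u hu v hv => by
    rw [dist_eq_norm, Real.dist_eq]
    exact (hf u hu v hv).trans
      (mul_le_mul_of_nonneg_right (Real.le_coe_toNNReal L) (abs_nonneg _))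

theorem LipschitzOnWith.tendsto_dist_comp {α β ι : Type*} [PseudoMetricSpace α]
    [PseudoMetricSpace β] {K : ℝ≥0} {f : α → β} {s : Set α} (hf : LipschitzOnWith K f s)
    {l : Filter ι} {x y : ι → α} (hx : ∀ i, x i ∈ s) (hy : ∀ i, y i ∈ s)
    (hxy : Tendsto (fun i => dist (x i) (y i)) l (𝓝 0)) :
    Tendsto (fun i => dist (f (x i)) (f (y i))) l (𝓝 0) := by
  have hK : Tendsto (fun i => K * dist (x i) (y i)) l (𝓝 0) := by
    simpa using hxy.const_mul (K : ℝ)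
  exact squeeze_zero (fun _ => dist_nonneg) (fun i => hf.dist_le_mul _ (hx i) _ (hy i)) hK

theorem stmt13_general (p : ℕ)
    (z : ℤ → ℝ) (hz01 : ∀ k, z k ∈ Set.Icc (0:ℝ) 1)
    (δ₀ : ℝ)
    (ζ η : ℕ → ℕ)
    (hconv : ∀ k : ℤ, Tendsto (fun n => |z (k + ζ n) - z k|) atTop (nhds 0))
    (hsep : ∀ n : ℕ, δ₀ ≤ |z ((ζ n : ℤ) + η n) - z (η n)|)
    (h : ℝ → EuclideanSpace ℝ (Fin p)) (Lh ℓ : ℝ) (hℓ : 0 < ℓ)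
    (hlip : ∀ u ∈ Set.Icc (0:ℝ) 1, ∀ v ∈ Set.Icc (0:ℝ) 1, ‖h u - h v‖ ≤ Lh * |u - v|)
    (hlow : ∀ u ∈ Set.Icc (0:ℝ) 1, ∀ v ∈ Set.Icc (0:ℝ) 1, ℓ * |u - v| ≤ ‖h u - h v‖) :
    (∃ M, ∀ k : ℤ, ‖h (z k)‖ ≤ M) ∧
    (∀ k : ℤ, Tendsto (fun n => ‖h (z (k + ζ n)) - h (z k)‖) atTop (nhds 0)) ∧
    (∀ n : ℕ, ℓ * δ₀ ≤ ‖h (z ((ζ n : ℤ) + η n)) - h (z (η n))‖) := by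
  have hLip := LipschitzOnWith.toNNReal_of_norm_sub_le hlip
  refine ⟨?_, fun k => ?_, fun n => ?_⟩
  · obtain ⟨M, hM⟩ := isCompact_Icc.exists_bound_of_continuousOn hLip.continuousOn
    exact ⟨M, fun k => hM _ (hz01 k)⟩
  · have hdist : Tendsto (fun n => dist (z (k + ζ n)) (z k)) atTop (𝓝 0) := by
      simpa only [Real.dist_eq] using hconv k
    simpa only [dist_eq_norm] using
      hLip.tendsto_dist_comp (fun _ => hz01 _) (fun _ => hz01 k) hdist
  · exact (mul_le_mul_of_nonneg_left (hsep n) hℓ.le).trans (hlow _ (hz01 _) _ (hz01 _))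

/-- A bi-Lipschitz image (on [0,1]) of an unpredictable real sequence with values in
[0,1] is an unpredictable sequence, with unpredictability constant `ℓδ₀`. -/
theorem stmt13 (p : ℕ)
    (z : ℤ → ℝ) (hz01 : ∀ k, z k ∈ Set.Icc (0:ℝ) 1)
    (δ₀ : ℝ) (hδ : 0 < δ₀)
    (ζ η : ℕ → ℕ) (hζ : Tendsto ζ atTop atTop) (hη : Tendsto η atTop atTop)
    (hconv : ∀ k : ℤ, Tendsto (fun n => |z (k + ζ n) - z k|) atTop (nhds 0))
    (hsep : ∀ n : ℕ, δ₀ ≤ |z ((ζ n : ℤ) + η n) - z (η n)|)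
    (h : ℝ → EuclideanSpace ℝ (Fin p)) (Lh ℓ : ℝ) (hLh : 0 < Lh) (hℓ : 0 < ℓ)
    (hlip : ∀ u ∈ Set.Icc (0:ℝ) 1, ∀ v ∈ Set.Icc (0:ℝ) 1, ‖h u - h v‖ ≤ Lh * |u - v|)
    (hlow : ∀ u ∈ Set.Icc (0:ℝ) 1, ∀ v ∈ Set.Icc (0:ℝ) 1, ℓ * |u - v| ≤ ‖h u - h v‖) :
    (∃ M, ∀ k : ℤ, ‖h (z k)‖ ≤ M) ∧
    (∀ k : ℤ, Tendsto (fun n => ‖h (z (k + ζ n)) - h (z k)‖) atTop (nhds 0)) ∧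
    (∀ n : ℕ, ℓ * δ₀ ≤ ‖h (z ((ζ n : ℤ) + η n)) - h (z (η n))‖) :=
  stmt13_general p z hz01 δ₀ ζ η hconv hsep h Lh ℓ hℓ hlip hlow
end

section
/- If a uniformly continuous bounded function ψ : ℝ → ℝ^p satisfies: there exist sequences μ_n → ∞, ν_n → ∞ and constants ε₀ > 0, r > 0 such that ‖ψ(t + μ_n) − ψ(t)‖ → 0 uniformly on compact subsets of ℝ and ‖ψ(t + μ_n) − ψ(t)‖ ≥ ε₀ for each t ∈ [ν_n − r, ν_n + r] and n ∈ ℕ, then ψ is not a periodic function, i.e., there is no T > 0 with ψ(t + T) = ψ(t) for all t. -/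
/-! If ψ were `T`-periodic, so would be every translate `ψ (· + μ n)`, and uniform convergence
on the single period `[0, T]` would then hold on all of `ℝ`; but at `t = ν n` the translates stay
`ε₀` away from `ψ`. -/

open Filter Set Function

section
variable {α β ι : Type*} [AddCommGroup α] [LinearOrder α] [IsOrderedAddMonoid α] [Archimedean α]
  {f : α → β} {T : α}

theorem Function.Periodic.comp_toIcoMod (hf : Periodic f T) (hT : 0 < T) (a : α) :
    f ∘ toIcoMod hT a = f :=
  funext fun _ => hf.sub_zsmul_eq _

theorem Function.Periodic.tendstoUniformly_of_tendstoUniformlyOn_Icc [UniformSpace β]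
    {F : ι → α → β} {l : Filter ι} (hT : 0 < T) (hF : ∀ i, Periodic (F i) T)
    (hf : Periodic f T) (a : α) (h : TendstoUniformlyOn F f l (Icc a (a + T))) :
    TendstoUniformly F f l := by
  have hpre : toIcoMod hT a ⁻¹' Icc a (a + T) = univ :=
    eq_univ_of_forall fun x => Ico_subset_Icc_self (toIcoMod_mem_Ico hT a x)
  simpa only [(hF _).comp_toIcoMod hT a, hf.comp_toIcoMod hT a, hpre, tendstoUniformlyOn_univ]
    using h.comp (toIcoMod hT a)

end

theorem stmt18_general (p : ℕ) (ψ : ℝ → EuclideanSpace ℝ (Fin p))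
    (ε₀ r : ℝ) (hε : 0 < ε₀) (hr : 0 < r)
    (μ ν : ℕ → ℝ)
    (hconv : ∀ C : Set ℝ, IsCompact C →
      TendstoUniformlyOn (fun n t => ψ (t + μ n)) ψ atTop C)
    (hsep : ∀ n : ℕ, ∀ t ∈ Set.Icc (ν n - r) (ν n + r), ε₀ ≤ ‖ψ (t + μ n) - ψ t‖) :
    ¬ ∃ T > (0:ℝ), ∀ t : ℝ, ψ (t + T) = ψ t := by
  rintro ⟨T, hT, hper⟩
  have hunif : TendstoUniformly (fun n t => ψ (t + μ n)) ψ atTop :=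
    Periodic.tendstoUniformly_of_tendstoUniformlyOn_Icc hT
      (fun n t => by simp only [add_right_comm t T, hper]) hper 0
      (by simpa only [zero_add] using hconv _ isCompact_Icc)
  obtain ⟨n, hn⟩ := (Metric.tendstoUniformly_iff.mp hunif ε₀ hε).exists
  have hsep_n := hsep n (ν n) ⟨by linarith, by linarith⟩
  rw [← dist_eq_norm, dist_comm] at hsep_n
  exact (hn (ν n)).not_ge hsep_n

/-- An unpredictable function is not periodic. -/
theorem stmt18 (p : ℕ) (ψ : ℝ → EuclideanSpace ℝ (Fin p))
    (hψu : UniformContinuous ψ) (hψb : ∃ C, ∀ t, ‖ψ t‖ ≤ C)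
    (ε₀ r : ℝ) (hε : 0 < ε₀) (hr : 0 < r)
    (μ ν : ℕ → ℝ) (hμ : Tendsto μ atTop atTop) (hν : Tendsto ν atTop atTop)
    (hconv : ∀ C : Set ℝ, IsCompact C →
      TendstoUniformlyOn (fun n t => ψ (t + μ n)) ψ atTop C)
    (hsep : ∀ n : ℕ, ∀ t ∈ Set.Icc (ν n - r) (ν n + r), ε₀ ≤ ‖ψ (t + μ n) - ψ t‖) :
    ¬ ∃ T > (0:ℝ), ∀ t : ℝ, ψ (t + T) = ψ t :=
  stmt18_general p ψ ε₀ r hε hr μ ν hconv hsep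
end

section
/- Let {σ_k}_{k∈ℤ} be a bounded sequence in ℝ^p, ω > 0, θ_k = θ₀ + kω, and g(t) = σ_k for t ∈ [θ_k, θ_{k+1}). If {σ_k} is unpredictable with unpredictability constant δ₀ and sequences ζ_n, η_n, then the function g satisfies: ‖g(t + ωζ_n) − g(t)‖ → 0 as n → ∞ for each t in any compact subset of ℝ contained in a finite union of partition intervals, and ‖g(t + ωζ_n) − g(t)‖ ≥ δ₀ for every t ∈ [θ_{η_n}, θ_{η_n+1}) and every n ∈ ℕ. -/
/-!
On the uniform partition `θ k = θ₀ + k ω` the index of the interval containing `t` is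
`⌊(t - θ₀) / ω⌋`, so `g = σ ∘ ⌊(· - θ₀) / ω⌋`. Shifting `t` by `ω m` shifts this index by `m`,
hence `g (t + ω ζₙ) - g t = σ (k + ζₙ) - σ k` for the index `k` of `t`, and both claims are
read off from the corresponding properties of `σ`.
-/

open Filter

section UniformPartition

variable {θ₀ ω : ℝ} {θ : ℤ → ℝ}

theorem mem_Ico_iff_floor_eq (hω : 0 < ω) (hθ : ∀ k, θ k = θ₀ + k * ω) (k : ℤ) (t : ℝ) :
    t ∈ Set.Ico (θ k) (θ (k + 1)) ↔ ⌊(t - θ₀) / ω⌋ = k := by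
  rw [Int.floor_eq_iff, le_div_iff₀ hω, div_lt_iff₀ hω, hθ, hθ, Set.mem_Ico]
  push_cast
  constructor <;> rintro ⟨h₁, h₂⟩ <;> constructor <;> linarith

theorem floor_add_mul_sub_div (hω : ω ≠ 0) (t : ℝ) (m : ℤ) :
    ⌊(t + ω * m - θ₀) / ω⌋ = ⌊(t - θ₀) / ω⌋ + m := by
  rw [← Int.floor_add_intCast]
  congr 1
  field_simp
  ring

variable {E : Type*} {σ : ℤ → E} {g : ℝ → E}

theorem eq_comp_floor_of_forall_mem_Ico (hω : 0 < ω) (hθ : ∀ k, θ k = θ₀ + k * ω)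
    (hg : ∀ (k : ℤ) (t : ℝ), t ∈ Set.Ico (θ k) (θ (k + 1)) → g t = σ k) (t : ℝ) :
    g t = σ ⌊(t - θ₀) / ω⌋ :=
  hg _ t ((mem_Ico_iff_floor_eq hω hθ _ t).2 rfl)

end UniformPartition

theorem stmt19_general (p : ℕ) (σ : ℤ → EuclideanSpace ℝ (Fin p))
    (θ₀ ω : ℝ) (hω : 0 < ω)
    (θ : ℤ → ℝ) (hθ : ∀ k, θ k = θ₀ + k * ω)
    (g : ℝ → EuclideanSpace ℝ (Fin p))
    (hg : ∀ (k : ℤ) (t : ℝ), t ∈ Set.Ico (θ k) (θ (k + 1)) → g t = σ k)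
    (δ₀ : ℝ)
    (ζ η : ℕ → ℕ)
    (hconv : ∀ k : ℤ, Tendsto (fun n => ‖σ (k + ζ n) - σ k‖) atTop (nhds 0))
    (hsep : ∀ n : ℕ, δ₀ ≤ ‖σ ((ζ n : ℤ) + η n) - σ (η n)‖) :
    (∀ t : ℝ, Tendsto (fun n => ‖g (t + ω * ζ n) - g t‖) atTop (nhds 0)) ∧
    (∀ n : ℕ, ∀ t ∈ Set.Ico (θ (η n)) (θ ((η n : ℤ) + 1)),
      δ₀ ≤ ‖g (t + ω * ζ n) - g t‖) := by
  have hg_floor := eq_comp_floor_of_forall_mem_Ico hω hθ hg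
  have hg_shift (t : ℝ) (m : ℕ) : g (t + ω * m) = σ (⌊(t - θ₀) / ω⌋ + m) := by
    rw [hg_floor, ← floor_add_mul_sub_div hω.ne', Int.cast_natCast]
  refine ⟨fun t => ?_, fun n t ht => ?_⟩
  · simpa only [hg_shift, hg_floor] using hconv ⌊(t - θ₀) / ω⌋
  · rw [hg_shift, hg_floor, (mem_Ico_iff_floor_eq hω hθ _ t).1 ht, add_comm]
    exact hsep n

/-- The piecewise constant function `g` built from an unpredictable sequence `σ` inherits
the convergence and separation properties along the shifts `ωζₙ`. -/
theorem stmt19 (p : ℕ) (σ : ℤ → EuclideanSpace ℝ (Fin p)) (Mσ : ℝ)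
    (hσ : ∀ k, ‖σ k‖ ≤ Mσ)
    (θ₀ ω : ℝ) (hω : 0 < ω)
    (θ : ℤ → ℝ) (hθ : ∀ k, θ k = θ₀ + k * ω)
    (g : ℝ → EuclideanSpace ℝ (Fin p))
    (hg : ∀ (k : ℤ) (t : ℝ), t ∈ Set.Ico (θ k) (θ (k + 1)) → g t = σ k)
    (δ₀ : ℝ) (hδ : 0 < δ₀)
    (ζ η : ℕ → ℕ) (hζ : Tendsto ζ atTop atTop) (hη : Tendsto η atTop atTop)
    (hconv : ∀ k : ℤ, Tendsto (fun n => ‖σ (k + ζ n) - σ k‖) atTop (nhds 0))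
    (hsep : ∀ n : ℕ, δ₀ ≤ ‖σ ((ζ n : ℤ) + η n) - σ (η n)‖) :
    (∀ t : ℝ, Tendsto (fun n => ‖g (t + ω * ζ n) - g t‖) atTop (nhds 0)) ∧
    (∀ n : ℕ, ∀ t ∈ Set.Ico (θ (η n)) (θ ((η n : ℤ) + 1)),
      δ₀ ≤ ‖g (t + ω * ζ n) - g t‖) :=
  stmt19_general p σ θ₀ ω hω θ hθ g hg δ₀ ζ η hconv hsep
end
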